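/- arXiv:2601.01174 — 2 statements merged into one kernel-verified Lean document; each statement's English description precedes it below -/
import Mathlib

section
/- Suppose the scalar functions A, B, C : ℝ → ℝ satisfy A' = B, B' = −A + u·C, C' = −u·B for a constant control u, and suppose A ≡ 0 on a nonempty open interval while 1 + C + u·A ≡ 0 there (vanishing Hamiltonian). Then on that interval C ≡ −1 and u = 0. -/
/-!
On the arc `B = A' ≡ 0` and the Hamiltonian gives `C ≡ -1`; hence `0 = B' = -A + u C = -u`.
-/

open Set

theorem HasDerivAt.eq_zero_of_eqOn_const {𝕜 F : Type*} [NontriviallyNormedField 𝕜]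
    [NormedAddCommGroup F] [NormedSpace 𝕜 F] {f : 𝕜 → F} {f' : F} {U : Set 𝕜} {x : 𝕜} {c : F}
    (h : HasDerivAt f f' x) (hU : IsOpen U) (hx : x ∈ U) (hc : EqOn f (fun _ => c) U) :
    f' = 0 :=
  h.unique ((hasDerivAt_const x c).congr_of_eventuallyEq (hc.eventuallyEq_of_mem (hU.mem_nhds hx)))

theorem singular_arc_is_geodesic_general (u a b : ℝ) (hab : a < b) (A B C : ℝ → ℝ)
    (hA : ∀ s ∈ Set.Ioo a b, HasDerivAt A (B s) s)
    (hB : ∀ s ∈ Set.Ioo a b, HasDerivAt B (-A s + u * C s) s)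
    (hA0 : ∀ s ∈ Set.Ioo a b, A s = 0)
    (hH : ∀ s ∈ Set.Ioo a b, 1 + C s + u * A s = 0) :
    (∀ s ∈ Set.Ioo a b, C s = -1) ∧ u = 0 := by
  have hC : ∀ s ∈ Ioo a b, C s = -1 := fun s hs => by
    have h := hH s hs
    rw [hA0 s hs, mul_zero, add_zero] at h
    linarith
  have hB0 : ∀ s ∈ Ioo a b, B s = 0 := fun s hs =>
    (hA s hs).eq_zero_of_eqOn_const isOpen_Ioo hs hA0
  obtain ⟨s, hs⟩ : (Ioo a b).Nonempty := nonempty_Ioo.mpr hab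
  have hB' : -A s + u * C s = 0 := (hB s hs).eq_zero_of_eqOn_const isOpen_Ioo hs hB0
  rw [hA0 s hs, hC s hs] at hB'
  exact ⟨hC, by linarith⟩

theorem singular_arc_is_geodesic (u a b : ℝ) (hab : a < b) (A B C : ℝ → ℝ)
    (hA : ∀ s ∈ Set.Ioo a b, HasDerivAt A (B s) s)
    (hB : ∀ s ∈ Set.Ioo a b, HasDerivAt B (-A s + u * C s) s)
    (hC : ∀ s ∈ Set.Ioo a b, HasDerivAt C (-(u * B s)) s)
    (hA0 : ∀ s ∈ Set.Ioo a b, A s = 0)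
    (hH : ∀ s ∈ Set.Ioo a b, 1 + C s + u * A s = 0) :
    (∀ s ∈ Set.Ioo a b, C s = -1) ∧ u = 0 :=
  singular_arc_is_geodesic_general u a b hab A B C hA hB hA0 hH
end

section
/- Let k₃ be a unit vector in ℝ³, and let v, w ∈ ℝ³ satisfy ⟨k₃, v⟩ = ⟨k₃, w⟩ and ‖v‖ = ‖w‖. Suppose the projections v₀ = v − k₃⟨k₃,v⟩ and w₀ = w − k₃⟨k₃,w⟩ are nonzero. Then there exists θ ∈ ℝ such that R(k₃,θ) v = w, and θ may be chosen as the signed angle φ with cos φ = ⟨v̂₀, ŵ₀⟩ and sin φ = ⟨k₃, v̂₀ × ŵ₀⟩, where v̂₀ = v₀/‖v₀‖ and ŵ₀ = w₀/‖w₀‖. -/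
open Matrix Real

noncomputable def skew (k : Fin 3 → ℝ) : Matrix (Fin 3) (Fin 3) ℝ :=
  !![0, -k 2, k 1; k 2, 0, -k 0; -k 1, k 0, 0]

noncomputable def Rrot (k : Fin 3 → ℝ) (θ : ℝ) : Matrix (Fin 3) (Fin 3) ℝ :=
  1 + Real.sin θ • skew k + (1 - Real.cos θ) • (skew k * skew k)

/-!
Write `v₀, w₀` for the components of `v, w` orthogonal to the unit axis `k`; they have equal
length because the components along `k` and the total lengths agree. In the plane `k⊥`, the map
`x ↦ k × x` is the rotation by a right angle, and the expansion of `v₀ × (v₀ × w₀)` gives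
`|v₀|² w₀ = ⟨v₀, w₀⟩ v₀ + ⟨k, v₀ × w₀⟩ (k × v₀)`. So after normalising,
`ŵ₀ = cos φ v̂₀ + sin φ (k × v̂₀)`, which by Rodrigues' formula is `R(k, φ) v̂₀`;
since `R(k, φ)` fixes `k`, it maps `v` to `w`.
-/

lemma exists_cos_sin_eq {c s : ℝ} (h : c ^ 2 + s ^ 2 = 1) :
    ∃ θ : ℝ, Real.cos θ = c ∧ Real.sin θ = s := by
  set z : ℂ := ⟨c, s⟩
  have hz : ‖z‖ = 1 := by
    rw [Complex.norm_def, Complex.normSq_mk, ← sq, ← sq, h, Real.sqrt_one]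
  have hz₀ : z ≠ 0 := norm_ne_zero_iff.mp (by rw [hz]; exact one_ne_zero)
  exact ⟨z.arg, by rw [Complex.cos_arg hz₀, hz, div_one], by rw [Complex.sin_arg, hz, div_one]⟩

lemma skew_mulVec (k u : Fin 3 → ℝ) : skew k *ᵥ u = k ⨯₃ u := by
  ext i
  fin_cases i <;> simp [skew, cross_apply, mulVec, dotProduct, Fin.sum_univ_three] <;> ring

lemma Rrot_mulVec (k u : Fin 3 → ℝ) (θ : ℝ) :
    Rrot k θ *ᵥ u = u + Real.sin θ • (k ⨯₃ u) + (1 - Real.cos θ) • (k ⨯₃ (k ⨯₃ u)) := by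
  rw [Rrot, add_mulVec, add_mulVec, one_mulVec, smul_mulVec, smul_mulVec, ← mulVec_mulVec,
    skew_mulVec, skew_mulVec]

lemma Rrot_mulVec_self (k : Fin 3 → ℝ) (θ : ℝ) : Rrot k θ *ᵥ k = k := by
  simp [Rrot_mulVec, cross_self]

section Orthogonal

variable {k x y : Fin 3 → ℝ} (hk : k ⬝ᵥ k = 1) (hx : k ⬝ᵥ x = 0) (hy : k ⬝ᵥ y = 0)
include hk hx

lemma cross_cross_of_orthogonal : k ⨯₃ (k ⨯₃ x) = -x := by
  rw [cross_cross_eq_smul_sub_smul', hx, hk]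
  simp

lemma Rrot_mulVec_of_orthogonal (θ : ℝ) :
    Rrot k θ *ᵥ x = Real.cos θ • x + Real.sin θ • (k ⨯₃ x) := by
  rw [Rrot_mulVec, cross_cross_of_orthogonal hk hx]
  module

include hy

lemma cross_eq_smul_of_orthogonal : x ⨯₃ y = (k ⬝ᵥ x ⨯₃ y) • k := by
  have h₀ : k ⨯₃ (x ⨯₃ y) = 0 := by
    rw [cross_cross_eq_smul_sub_smul', hy, dotProduct_comm x k, hx, zero_smul, zero_smul, sub_zero]
  have h := cross_cross_eq_smul_sub_smul' k k (x ⨯₃ y)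
  rw [h₀, hk, map_zero, one_smul] at h
  exact (sub_eq_zero.mp h.symm).symm

lemma dotProduct_sq_add_sq_of_orthogonal :
    (x ⬝ᵥ y) ^ 2 + (k ⬝ᵥ x ⨯₃ y) ^ 2 = (x ⬝ᵥ x) * (y ⬝ᵥ y) := by
  have h := cross_dot_cross x y x y
  rw [cross_eq_smul_of_orthogonal hk hx hy, smul_dotProduct, dotProduct_smul, hk,
    dotProduct_comm y x] at h
  simp only [smul_eq_mul] at h
  linear_combination h

lemma smul_eq_dotProduct_smul_add_of_orthogonal :
    (x ⬝ᵥ x) • y = (x ⬝ᵥ y) • x + (k ⬝ᵥ x ⨯₃ y) • (k ⨯₃ x) := by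
  have h := cross_cross_eq_smul_sub_smul' x x y
  rw [cross_eq_smul_of_orthogonal hk hx hy, LinearMap.map_smul, ← cross_anticomm k x] at h
  linear_combination (norm := module) h

lemma Rrot_mulVec_eq_of_orthogonal (hxx : x ⬝ᵥ x = 1) {θ : ℝ} (hc : Real.cos θ = x ⬝ᵥ y)
    (hs : Real.sin θ = k ⬝ᵥ x ⨯₃ y) : Rrot k θ *ᵥ x = y := by
  rw [Rrot_mulVec_of_orthogonal hk hx, hc, hs,
    ← smul_eq_dotProduct_smul_add_of_orthogonal hk hx hy, hxx, one_smul]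

end Orthogonal

section RealDotProduct

variable {n : Type*} [Fintype n]

lemma dotProduct_self_pos {x : n → ℝ} (hx : x ≠ 0) : 0 < x ⬝ᵥ x :=
  (Finset.sum_nonneg fun i _ => mul_self_nonneg (x i)).lt_of_ne
    (Ne.symm (dotProduct_self_eq_zero.not.mpr hx))

lemma dotProduct_self_inv_sqrt_smul {x : n → ℝ} (hx : x ≠ 0) :
    ((√(x ⬝ᵥ x))⁻¹ • x) ⬝ᵥ ((√(x ⬝ᵥ x))⁻¹ • x) = 1 := by
  have h := dotProduct_self_pos hx
  rw [smul_dotProduct, dotProduct_smul, smul_eq_mul, smul_eq_mul, ← mul_assoc, ← mul_inv,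
    mul_self_sqrt h.le, inv_mul_cancel₀ h.ne']

lemma sqrt_smul_inv_sqrt_smul (x : n → ℝ) : √(x ⬝ᵥ x) • (√(x ⬝ᵥ x))⁻¹ • x = x := by
  rcases eq_or_ne x 0 with rfl | hx
  · simp
  · rw [smul_smul, mul_inv_cancel₀ (sqrt_ne_zero'.mpr (dotProduct_self_pos hx)), one_smul]

variable {k : n → ℝ} (hk : k ⬝ᵥ k = 1) (v : n → ℝ)
include hk

lemma dotProduct_sub_smul_self : k ⬝ᵥ (v - (k ⬝ᵥ v) • k) = 0 := by
  rw [dotProduct_sub, dotProduct_smul, hk, smul_eq_mul, mul_one, sub_self]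

lemma dotProduct_self_sub_smul :
    (v - (k ⬝ᵥ v) • k) ⬝ᵥ (v - (k ⬝ᵥ v) • k) = v ⬝ᵥ v - (k ⬝ᵥ v) ^ 2 := by
  simp only [dotProduct_sub, sub_dotProduct, dotProduct_smul, smul_dotProduct, smul_eq_mul, hk,
    dotProduct_comm v k]
  ring

end RealDotProduct

theorem back_substitution_angle (k₃ v w : Fin 3 → ℝ) (hk : k₃ ⬝ᵥ k₃ = 1)
    (hdot : k₃ ⬝ᵥ v = k₃ ⬝ᵥ w) (hnorm : v ⬝ᵥ v = w ⬝ᵥ w)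
    (hv0 : v - (k₃ ⬝ᵥ v) • k₃ ≠ 0) (hw0 : w - (k₃ ⬝ᵥ w) • k₃ ≠ 0) :
    ∃ θ : ℝ, (Rrot k₃ θ).mulVec v = w ∧
      (let v₀ := v - (k₃ ⬝ᵥ v) • k₃
       let w₀ := w - (k₃ ⬝ᵥ w) • k₃
       let vhat := (Real.sqrt (v₀ ⬝ᵥ v₀))⁻¹ • v₀
       let what := (Real.sqrt (w₀ ⬝ᵥ w₀))⁻¹ • w₀
       Real.cos θ = vhat ⬝ᵥ what ∧ Real.sin θ = k₃ ⬝ᵥ crossProduct vhat what) := by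
  set v₀ := v - (k₃ ⬝ᵥ v) • k₃
  set w₀ := w - (k₃ ⬝ᵥ w) • k₃
  set vhat := (√(v₀ ⬝ᵥ v₀))⁻¹ • v₀
  set what := (√(w₀ ⬝ᵥ w₀))⁻¹ • w₀
  have hvhat : k₃ ⬝ᵥ vhat = 0 := by rw [dotProduct_smul, dotProduct_sub_smul_self hk, smul_zero]
  have hwhat : k₃ ⬝ᵥ what = 0 := by rw [dotProduct_smul, dotProduct_sub_smul_self hk, smul_zero]
  obtain ⟨θ, hc, hs⟩ := exists_cos_sin_eq (c := vhat ⬝ᵥ what) (s := k₃ ⬝ᵥ vhat ⨯₃ what) <| by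
    rw [dotProduct_sq_add_sq_of_orthogonal hk hvhat hwhat, dotProduct_self_inv_sqrt_smul hv0,
      dotProduct_self_inv_sqrt_smul hw0, one_mul]
  have hr : √(v₀ ⬝ᵥ v₀) = √(w₀ ⬝ᵥ w₀) := by
    rw [dotProduct_self_sub_smul hk, dotProduct_self_sub_smul hk, hnorm, hdot]
  refine ⟨θ, ?_, hc, hs⟩
  calc Rrot k₃ θ *ᵥ v = Rrot k₃ θ *ᵥ (√(v₀ ⬝ᵥ v₀) • vhat + (k₃ ⬝ᵥ v) • k₃) := by
        rw [sqrt_smul_inv_sqrt_smul, sub_add_cancel]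
    _ = √(w₀ ⬝ᵥ w₀) • what + (k₃ ⬝ᵥ w) • k₃ := by
        rw [mulVec_add, mulVec_smul _ _ vhat, mulVec_smul _ _ k₃, Rrot_mulVec_self,
          Rrot_mulVec_eq_of_orthogonal hk hvhat hwhat (dotProduct_self_inv_sqrt_smul hv0) hc hs,
          hr, hdot]
    _ = w := by rw [sqrt_smul_inv_sqrt_smul, sub_add_cancel]
end
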